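/- arXiv:1105.3712 — 5 statements merged into one kernel-verified Lean document; each statement's English description precedes it below -/
import Mathlib

section
/- For every finite simple graph H on n vertices with m' non-adjacent (unordered) pairs of distinct vertices (non-edges), there exists a finite simple graph G on n + m' vertices such that every proper vertex coloring of G contains a rainbow induced subgraph isomorphic to H; consequently ρ(H) ≤ n + m'. -/
/-!
Order the vertices of `H` and blow each vertex `v` up into a clique of size one more than the
number of non-neighbours of `v` preceding it; the resulting graph has `n + m'` vertices. Given a
proper colouring, pick one vertex from each clique greedily along the order: the clique of `v`
carries more colours than the representatives of the earlier non-neighbours of `v` use, so one of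
its vertices avoids all of them. Adjacent representatives get distinct colours because the
colouring is proper, and the representatives induce a copy of `H`.
-/

/-- `ArrowsR G H` (written `G →r H`) means: every proper vertex coloring of `G`
contains a rainbow induced subgraph isomorphic to `H`, i.e. an induced copy of `H`
(a graph embedding) whose vertices receive pairwise distinct colors. -/
def ArrowsR {α β : Type} (G : SimpleGraph α) (H : SimpleGraph β) : Prop :=
  ∀ c : α → ℕ, (∀ u v : α, G.Adj u v → c u ≠ c v) →
    ∃ f : H ↪g G, Function.Injective fun h => c (f h)

/-- `rho H` is the minimum number of vertices of a graph `G` with `G →r H`. -/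
noncomputable def rho {β : Type} (H : SimpleGraph β) : ℕ :=
  sInf {m : ℕ | ∃ G : SimpleGraph (Fin m), ArrowsR G H}

open Finset

theorem ArrowsR.of_iso {α α' β : Type} {G : SimpleGraph α} {G' : SimpleGraph α'}
    {H : SimpleGraph β} (e : G ≃g G') (h : ArrowsR G H) : ArrowsR G' H := by
  intro c hc
  obtain ⟨f, hf⟩ := h (c ∘ e) fun u v huv => hc _ _ (e.map_adj_iff.mpr huv)
  exact ⟨e.toEmbedding.comp f, hf⟩

namespace SimpleGraph

variable {V : Type}

theorem card_edgeFinset_eq_sum_card_lt [LinearOrder V] [Fintype V] (G : SimpleGraph V)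
    [DecidableRel G.Adj] : #G.edgeFinset = ∑ v, #{w | G.Adj v w ∧ w < v} := by
  rw [← card_sigma, eq_comm]
  refine card_bij' (fun p _ => s(p.1, p.2)) (fun e _ => ⟨e.sup, e.inf⟩) ?_ ?_ ?_ ?_
  · rintro ⟨v, w⟩ h
    simp only [mem_sigma, mem_filter, mem_univ, true_and] at h
    simpa using h.1
  · intro e he
    induction e with | _ a b
    rw [mem_edgeFinset, mem_edgeSet] at he
    rcases he.ne.lt_or_gt with h | h
    · simp [h.le, h, he.symm]
    · simp [h.le, h, he]
  · rintro ⟨v, w⟩ h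
    simp only [mem_sigma, mem_filter, mem_univ, true_and] at h
    simp [h.2.le]
  · intro e _
    induction e with | _ a b
    rcases le_total a b with h | h
    · simp [h, Sym2.eq_swap]
    · simp [h]

def cliqueBlowup (H : SimpleGraph V) (k : V → ℕ) : SimpleGraph (Σ v, Fin (k v)) where
  Adj x y := x ≠ y ∧ (x.1 = y.1 ∨ H.Adj x.1 y.1)
  symm := ⟨fun _ _ h => ⟨h.1.symm, h.2.imp Eq.symm H.adj_symm⟩⟩
  loopless := ⟨fun _ h => h.1 rfl⟩

@[simp]
theorem cliqueBlowup_adj {H : SimpleGraph V} {k : V → ℕ} {x y : Σ v, Fin (k v)} :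
    (cliqueBlowup H k).Adj x y ↔ x ≠ y ∧ (x.1 = y.1 ∨ H.Adj x.1 y.1) := Iff.rfl

namespace cliqueBlowup

variable {H : SimpleGraph V} {k : V → ℕ}

theorem injective_of_proper {c : (Σ v, Fin (k v)) → ℕ}
    (hc : ∀ x y, (cliqueBlowup H k).Adj x y → c x ≠ c y) (v : V) :
    Function.Injective fun a : Fin (k v) => c ⟨v, a⟩ := by
  intro a b hab
  by_contra hne
  exact hc _ _ ⟨fun h => hne (eq_of_heq (Sigma.mk.inj h).2), Or.inl rfl⟩ hab

def embedding (rep : ∀ v, Fin (k v)) : H ↪g cliqueBlowup H k where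
  toFun v := ⟨v, rep v⟩
  inj' _ _ h := congrArg Sigma.fst h
  map_rel_iff' {u v} := by
    simp only [cliqueBlowup_adj]
    refine ⟨fun ⟨hne, h⟩ => h.resolve_left fun huv => hne ?_, fun h => ⟨?_, Or.inr h⟩⟩
    · subst huv; rfl
    · exact fun huv => h.ne (congrArg Sigma.fst huv)

end cliqueBlowup

variable [LinearOrder V] [Fintype V] (H : SimpleGraph V) [DecidableRel H.Adj]

def earlierNonNeighbors (v : V) : Finset V := {w | Hᶜ.Adj v w ∧ w < v}

abbrev greedyBlowup : SimpleGraph (Σ v, Fin (#(H.earlierNonNeighbors v) + 1)) :=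
  H.cliqueBlowup fun v => #(H.earlierNonNeighbors v) + 1

variable {H}

theorem mem_earlierNonNeighbors {v w : V} :
    w ∈ H.earlierNonNeighbors v ↔ w < v ∧ ¬H.Adj v w := by
  simp only [earlierNonNeighbors, mem_filter, mem_univ, true_and, compl_adj]
  exact ⟨fun ⟨⟨_, hadj⟩, hlt⟩ => ⟨hlt, hadj⟩,
    fun ⟨hlt, hadj⟩ => ⟨⟨hlt.ne', hadj⟩, hlt⟩⟩

theorem greedyBlowup.exists_color_avoiding
    {c : (Σ v, Fin (#(H.earlierNonNeighbors v) + 1)) → ℕ}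
    (hc : ∀ x y, H.greedyBlowup.Adj x y → c x ≠ c y)
    (rep : ∀ v, Fin (#(H.earlierNonNeighbors v) + 1)) (v : V) :
    ∃ a, ∀ w ∈ H.earlierNonNeighbors v, c ⟨v, a⟩ ≠ c ⟨w, rep w⟩ := by
  have hcard : #((H.earlierNonNeighbors v).image fun w => c ⟨w, rep w⟩) <
      #(univ.image fun a => c ⟨v, a⟩) := by
    rw [card_image_of_injective _ (cliqueBlowup.injective_of_proper hc v), card_univ,
      Fintype.card_fin, Nat.lt_succ_iff]
    exact card_image_le
  obtain ⟨_, ha, hnot⟩ := exists_mem_notMem_of_card_lt_card hcard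
  obtain ⟨a, -, rfl⟩ := mem_image.mp ha
  exact ⟨a, fun w hw heq => hnot (mem_image.mpr ⟨w, hw, heq.symm⟩)⟩

theorem greedyBlowup.exists_section
    {c : (Σ v, Fin (#(H.earlierNonNeighbors v) + 1)) → ℕ}
    (hc : ∀ x y, H.greedyBlowup.Adj x y → c x ≠ c y) :
    ∃ rep : ∀ v, Fin (#(H.earlierNonNeighbors v) + 1),
      ∀ v, ∀ w ∈ H.earlierNonNeighbors v, c ⟨v, rep v⟩ ≠ c ⟨w, rep w⟩ := by
  suffices ∀ s : Finset V, ∃ rep : ∀ v, Fin (#(H.earlierNonNeighbors v) + 1),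
      ∀ v ∈ s, ∀ w ∈ s, w ∈ H.earlierNonNeighbors v → c ⟨v, rep v⟩ ≠ c ⟨w, rep w⟩ by
    obtain ⟨rep, hrep⟩ := this univ
    exact ⟨rep, fun v w => hrep v (mem_univ v) w (mem_univ w)⟩
  intro s
  induction s using Finset.induction_on_max with
  | empty => exact ⟨fun _ => 0, by simp⟩
  | insert u s hlt ih =>
    obtain ⟨rep, hrep⟩ := ih
    obtain ⟨a, ha⟩ := exists_color_avoiding hc rep u
    refine ⟨Function.update rep u a, fun v hv w hw hwv => ?_⟩
    have hvu : v ≤ u := (mem_insert.mp hv).elim le_of_eq fun hv => (hlt v hv).le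
    have hwu : w < u := (mem_earlierNonNeighbors.mp hwv).1.trans_le hvu
    rw [Function.update_of_ne hwu.ne]
    rcases mem_insert.mp hv with rfl | hv
    · rw [Function.update_self]
      exact ha w hwv
    · rw [Function.update_of_ne (hlt v hv).ne]
      exact hrep v hv w ((mem_insert.mp hw).resolve_left hwu.ne) hwv

theorem arrowsR_greedyBlowup : ArrowsR H.greedyBlowup H := by
  intro c hc
  obtain ⟨rep, hrep⟩ := greedyBlowup.exists_section hc
  refine ⟨cliqueBlowup.embedding rep, fun u v huv => ?_⟩
  by_contra hne
  by_cases hadj : H.Adj u v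
  · exact hc _ _ ((cliqueBlowup.embedding rep).map_adj_iff.mpr hadj) huv
  rcases lt_or_gt_of_ne hne with h | h
  · exact hrep v u (mem_earlierNonNeighbors.mpr ⟨h, fun h' => hadj h'.symm⟩) huv.symm
  · exact hrep u v (mem_earlierNonNeighbors.mpr ⟨h, hadj⟩) huv

variable (H) in
theorem card_greedyBlowup :
    Fintype.card (Σ v, Fin (#(H.earlierNonNeighbors v) + 1)) =
      Fintype.card V + #Hᶜ.edgeFinset := by
  rw [Fintype.card_sigma, Hᶜ.card_edgeFinset_eq_sum_card_lt, add_comm]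
  simp [sum_add_distrib, earlierNonNeighbors]

end SimpleGraph

/-- If `H` has `n` vertices and `m'` non-edges, then some graph on `n + m'` vertices
arrows `H`, and consequently `rho H ≤ n + m'`. -/
theorem stmt0 {V : Type} [Fintype V] [DecidableEq V]
    (H : SimpleGraph V) [DecidableRel H.Adj] (n m' : ℕ)
    (hn : n = Fintype.card V) (hm : m' = Hᶜ.edgeFinset.card) :
    (∃ G : SimpleGraph (Fin (n + m')), ArrowsR G H) ∧ rho H ≤ n + m' := by
  subst hn hm
  let : LinearOrder V := LinearOrder.lift' _ (Fintype.equivFin V).injective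
  have hcard : Fintype.card (Σ v, Fin (#(H.earlierNonNeighbors v) + 1)) =
      Fintype.card V + #Hᶜ.edgeFinset := by
    -- `convert` reconciles the order's decidable equality with the given one
    convert H.card_greedyBlowup
  have hG := H.arrowsR_greedyBlowup.of_iso (H.greedyBlowup.overFinIso hcard)
  exact ⟨⟨_, hG⟩, Nat.sInf_le ⟨_, hG⟩⟩
end

section
/- Let H be a finite simple graph on n vertices with chromatic number χ and with m' non-edges, and let k = ⌈n/χ⌉. Then the lower and upper bounds k(n − χ(k−1)/2) and n + m' are equal if and only if H is isomorphic to the Turán graph T(n,χ). -/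
/-!
Write `t n` for the number of non-edges of `turanGraph n r`. Adding one vertex to each of the `r`
classes of `turanGraph n r` gives `turanGraph (n + r) r` and creates exactly `n` new non-edges, so
`t (n + r) = t n + n`. The lower bound `k (n - r (k - 1) / 2)` with `k = ⌈n / r⌉` satisfies the same
recursion, since `k` grows by one, and both sides agree with `n` for `n ≤ r`. Hence the two bounds of
the theorem coincide exactly when `H` has as many non-edges, equivalently as many edges, as
`turanGraph n χ`. As `H` is `(χ + 1)`-clique-free, this means `H` is Turán-maximal, and Turán's
theorem identifies it with `turanGraph n χ`.
-/

open Finset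

namespace SimpleGraph

theorem card_edgeFinset_add_card_edgeFinset_compl {V : Type*} [Fintype V] [DecidableEq V]
    (G : SimpleGraph V) [DecidableRel G.Adj] :
    #G.edgeFinset + #Gᶜ.edgeFinset = (Fintype.card V).choose 2 := by
  rw [← card_union_of_disjoint (disjoint_edgeFinset.mpr disjoint_compl_right), ← edgeFinset_sup]
  convert card_edgeFinset_top_eq_card_choose_two (V := V)
  exact sup_compl_eq_top

variable {n r : ℕ}

theorem card_edgeFinset_compl_turanGraph_add (hr : 0 < r) :
    #(turanGraph (n + r) r)ᶜ.edgeFinset = #(turanGraph n r)ᶜ.edgeFinset + n := by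
  have hsum (m : ℕ) := card_edgeFinset_add_card_edgeFinset_compl (turanGraph m r)
  simp only [Fintype.card_fin] at hsum
  have hchoose : (n + r).choose 2 = n.choose 2 + r.choose 2 + n * r := by
    have : ((n + r).choose 2 : ℚ) = n.choose 2 + r.choose 2 + n * r := by
      simp only [Nat.cast_choose_two]; push_cast; ring
    exact_mod_cast this
  have hedges := card_edgeFinset_turanGraph_add (n := n) (r := r)
  rw [Nat.mul_sub_one] at hedges
  have hn_le := Nat.le_mul_of_pos_right n hr
  have hsum_n := hsum n
  have hsum_add := hsum (n + r)
  omega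

theorem card_edgeFinset_compl_turanGraph_of_le (h : n ≤ r) :
    #(turanGraph n r)ᶜ.edgeFinset = 0 := by
  simp [turanGraph_eq_top.mpr (.inr h)]

theorem natCast_add_card_edgeFinset_compl_turanGraph (hr : 0 < r) :
    (n : ℚ) + #(turanGraph n r)ᶜ.edgeFinset =
      ⌈(n : ℚ) / r⌉ * (n - r * (⌈(n : ℚ) / r⌉ - 1) / 2) := by
  induction n using Nat.strong_induction_on with
  | _ n ih =>
  rcases le_or_gt n r with hnr | hrn
  · rw [card_edgeFinset_compl_turanGraph_of_le hnr]
    rcases n.eq_zero_or_pos with rfl | hn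
    · simp
    · have : ⌈(n : ℚ) / r⌉ = 1 := by
        rw [Int.ceil_eq_iff, Int.cast_one, sub_self]
        exact ⟨by positivity, div_le_one_of_le₀ (by exact_mod_cast hnr) (by positivity)⟩
      simp [this]
  · obtain ⟨m, rfl⟩ := Nat.exists_eq_add_of_le' hrn.le
    have hceil : ⌈((m + r : ℕ) : ℚ) / r⌉ = ⌈(m : ℚ) / r⌉ + 1 := by
      rw [Nat.cast_add, add_div, div_self (by positivity), Int.ceil_add_one]
    rw [card_edgeFinset_compl_turanGraph_add hr, hceil]
    push_cast
    linear_combination ih m (by omega)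

variable {V : Type*} [Fintype V] {G : SimpleGraph V} [DecidableRel G.Adj]

theorem CliqueFree.card_edgeFinset_eq_turanGraph_iff (hr : 0 < r) (cf : G.CliqueFree (r + 1)) :
    #G.edgeFinset = #(turanGraph (Fintype.card V) r).edgeFinset ↔
      Nonempty (G ≃g turanGraph (Fintype.card V) r) := by
  refine ⟨fun h ↦ (isTuranMaximal_iff_nonempty_iso_turanGraph hr).mp ⟨cf, fun G' _ cf' ↦ ?_⟩,
    fun ⟨f⟩ ↦ f.card_edgeFinset_eq⟩
  rw [h, card_edgeFinset_turanGraph]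
  exact cf'.card_edgeFinset_le

theorem CliqueFree.card_edgeFinset_compl_eq_turanGraph_iff [DecidableEq V] (hr : 0 < r)
    (cf : G.CliqueFree (r + 1)) :
    #Gᶜ.edgeFinset = #(turanGraph (Fintype.card V) r)ᶜ.edgeFinset ↔
      Nonempty (G ≃g turanGraph (Fintype.card V) r) := by
  have hG := G.card_edgeFinset_add_card_edgeFinset_compl
  have hT := (turanGraph (Fintype.card V) r).card_edgeFinset_add_card_edgeFinset_compl
  rw [Fintype.card_fin] at hT
  rw [← cf.card_edgeFinset_eq_turanGraph_iff hr]
  omega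

end SimpleGraph

open SimpleGraph

/-- The lower bound `k(n − χ(k−1)/2)` and upper bound `n + m'` coincide
if and only if `H` is (isomorphic to) the Turán graph `T(n, χ)`. -/
theorem stmt7 {V : Type} [Fintype V] [Nonempty V] [DecidableEq V]
    (H : SimpleGraph V) [DecidableRel H.Adj] (n χ m' : ℕ) (k : ℤ)
    (hn : n = Fintype.card V) (hχ : H.chromaticNumber = χ)
    (hm : m' = Hᶜ.edgeFinset.card)
    (hk : k = ⌈(n : ℚ) / (χ : ℚ)⌉) :
    (k : ℚ) * ((n : ℚ) - (χ : ℚ) * ((k : ℚ) - 1) / 2) = (n : ℚ) + (m' : ℚ) ↔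
      Nonempty (H ≃g SimpleGraph.turanGraph n χ) := by
  subst hn hm hk
  have hχ_pos : 0 < χ := by
    have := H.colorable_of_fintype.chromaticNumber_pos
    rw [hχ] at this
    exact_mod_cast this
  have cf : H.CliqueFree (χ + 1) :=
    (chromaticNumber_le_iff_colorable.mp hχ.le).cliqueFree χ.lt_succ_self
  rw [← natCast_add_card_edgeFinset_compl_turanGraph hχ_pos, add_right_inj, Nat.cast_inj, eq_comm,
    cf.card_edgeFinset_compl_eq_turanGraph_iff hχ_pos]
end

section
/- For every n ≥ 2, the star S_n = K_{1,n−1} (one center adjacent to n−1 pairwise non-adjacent leaves) satisfies ρ(S_n) = n(n−1)/2 + 1. -/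
/-!
Upper bound: in the cone over disjoint cliques of sizes `1, …, n - 1` (which has
`n(n-1)/2 + 1` vertices) every proper coloring makes each clique rainbow, so Hall's condition
lets us pick one vertex per clique with pairwise distinct colors; with the apex they span a
rainbow induced star.

Lower bound: a graph on at most `t(t+1)/2` vertices has a proper coloring with no rainbow
independent `(t+1)`-set and no rainbow independent `t`-set with a common neighbour. If there is
an independent `(t+1)`-set `I`, give `I` one fresh color and color the remaining at most
`t(t-1)/2` vertices inductively: a rainbow set meets `I` at most once. Otherwise an injective
coloring works.
-/

open Finset

theorem Fin.exists_injective_mem_of_succ_le_card {m : ℕ} {α : Type*} [DecidableEq α]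
    (t : Fin m → Finset α) (ht : ∀ j, j.val + 1 ≤ #(t j)) :
    ∃ f : Fin m → α, Function.Injective f ∧ ∀ j, f j ∈ t j := by
  refine (all_card_le_biUnion_card_iff_exists_injective t).mp fun s => ?_
  rcases s.eq_empty_or_nonempty with rfl | hs
  · simp
  calc #s ≤ #(Iic (s.max' hs)) := card_le_card fun j hj => mem_Iic.mpr (s.le_max' j hj)
    _ = (s.max' hs).val + 1 := Fin.card_Iic _
    _ ≤ #(t (s.max' hs)) := ht _
    _ ≤ #(s.biUnion t) := card_le_card (subset_biUnion_of_mem t (s.max'_mem hs))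

theorem rho_eq_card {β : Type} {H : SimpleGraph β} {V : Type} [Fintype V] (G : SimpleGraph V)
    (hG : ArrowsR G H)
    (hmin : ∀ m < Fintype.card V, ∀ G' : SimpleGraph (Fin m), ¬ ArrowsR G' H) :
    rho H = Fintype.card V := by
  have hmem : Fintype.card V ∈ {m : ℕ | ∃ G : SimpleGraph (Fin m), ArrowsR G H} :=
    ⟨G.overFin rfl, hG.of_iso (G.overFinIso rfl)⟩
  refine le_antisymm (Nat.sInf_le hmem) (le_csInf ⟨_, hmem⟩ ?_)
  rintro m ⟨G', hG'⟩
  by_contra! hm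
  exact hmin m hm G' hG'

namespace SimpleGraph

variable {V : Type*} (G : SimpleGraph V)

structure IsStarBlockingColoring (U : Finset V) (t : ℕ) (c : V → ℕ) : Prop where
  adj_ne : ∀ u ∈ U, ∀ v ∈ U, G.Adj u v → c u ≠ c v
  not_injOn_indep : ∀ s ⊆ U, G.IsNIndepSet (t + 1) s → ¬ Set.InjOn c s
  not_injOn_star : ∀ v ∈ U, ∀ s ⊆ U, G.IsNIndepSet t s → (∀ x ∈ s, G.Adj v x) →
    ¬ Set.InjOn c s

variable {G}

theorem IsIndepSet.exists_isNIndepSet_subset {s s₀ : Finset V} (hs : G.IsIndepSet s)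
    (hs₀ : s₀ ⊆ s) {k : ℕ} (hk : k ≤ #s₀) : ∃ s' ⊆ s₀, G.IsNIndepSet k s' := by
  obtain ⟨s', hs's, hcard⟩ := exists_subset_card_eq hk
  exact ⟨s', hs's, hs.mono (coe_subset.mpr (hs's.trans hs₀)), hcard⟩

theorem isStarBlockingColoring_of_injOn {U : Finset V} {t : ℕ} {c : V → ℕ}
    (hc : Set.InjOn c U) (hU : ∀ s ⊆ U, ¬ G.IsNIndepSet t s) :
    G.IsStarBlockingColoring U t c where
  adj_ne u hu v hv huv hcuv := huv.ne (hc hu hv hcuv)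
  not_injOn_indep s hsU hs _ := by
    obtain ⟨s', hs's, hs'⟩ := hs.isIndepSet.exists_isNIndepSet_subset subset_rfl (k := t)
      (by rw [hs.card_eq]; omega)
    exact (hU s' (hs's.trans hsU) hs').elim
  not_injOn_star _ _ s hsU hs _ _ := hU s hsU hs

theorem isStarBlockingColoring_of_isIndepSet [DecidableEq V] {U I : Finset V} {t : ℕ}
    {c : V → ℕ} (hI : G.IsIndepSet I) (hc : G.IsStarBlockingColoring (U \ I) t c) :
    G.IsStarBlockingColoring U (t + 1) fun v => if v ∈ I then 0 else c v + 1 := by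
  set c' : V → ℕ := fun v => if v ∈ I then 0 else c v + 1
  have hsdiff (s : Finset V) (hs : Set.InjOn c' s) : Set.InjOn c ↑(s \ I) := by
    intro x hx y hy hxy
    simp only [coe_sdiff, Set.mem_sdiff, mem_coe] at hx hy
    exact hs hx.1 hy.1 (by simp only [c', if_neg hx.2, if_neg hy.2, hxy])
  have hcard (s : Finset V) (hs : Set.InjOn c' s) : #s ≤ #(s \ I) + 1 := by
    have : #(s ∩ I) ≤ 1 := card_le_one.mpr fun x hx y hy => by
      simp only [mem_inter] at hx hy
      exact hs hx.1 hy.1 (by simp only [c', if_pos hx.2, if_pos hy.2])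
    have := card_sdiff_add_card_inter s I
    omega
  refine ⟨fun u hu v hv huv => ?_, fun s hsU hs hrb => ?_, fun v hv s hsU hs hvs hrb => ?_⟩
  · by_cases huI : u ∈ I <;> by_cases hvI : v ∈ I <;>
      simp only [c', huI, hvI, if_true, if_false]
    · exact (hI huI hvI huv.ne huv).elim
    · omega
    · omega
    · exact fun h =>
        hc.adj_ne u (mem_sdiff.mpr ⟨hu, huI⟩) v (mem_sdiff.mpr ⟨hv, hvI⟩) huv (by omega)
  · have := hs.card_eq ▸ hcard s hrb
    obtain ⟨s', hs's, hs'⟩ :=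
      hs.isIndepSet.exists_isNIndepSet_subset (sdiff_subset (t := I)) (k := t + 1) (by omega)
    exact hc.not_injOn_indep s' (hs's.trans (sdiff_subset_sdiff hsU subset_rfl)) hs'
      ((hsdiff s hrb).mono (coe_subset.mpr hs's))
  · by_cases hvI : v ∈ I
    · have hsI : Disjoint s I := Finset.disjoint_left.mpr fun {x} hx hxI =>
        hI hvI hxI (hvs x hx).ne (hvs x hx)
      have hrb' := hsdiff s hrb
      rw [sdiff_eq_self_of_disjoint hsI] at hrb'
      exact hc.not_injOn_indep s (subset_sdiff.mpr ⟨hsU, hsI⟩) hs hrb'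
    · have := hs.card_eq ▸ hcard s hrb
      obtain ⟨s', hs's, hs'⟩ :=
        hs.isIndepSet.exists_isNIndepSet_subset (sdiff_subset (t := I)) (k := t) (by omega)
      exact hc.not_injOn_star v (mem_sdiff.mpr ⟨hv, hvI⟩) s'
        (hs's.trans (sdiff_subset_sdiff hsU subset_rfl)) hs'
        (fun x hx => hvs x (sdiff_subset (hs's hx))) ((hsdiff s hrb).mono (coe_subset.mpr hs's))

theorem exists_isStarBlockingColoring [DecidableEq V] (t : ℕ) (U : Finset V)
    (hU : #U ≤ (t + 1).choose 2) : ∃ c, G.IsStarBlockingColoring U t c := by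
  induction t generalizing U with
  | zero =>
    obtain rfl : U = ∅ := card_eq_zero.mp (by simpa using hU)
    refine ⟨0, ⟨by simp, fun s hs hs' => ?_, by simp⟩⟩
    simpa [subset_empty.mp hs] using hs'.card_eq
  | succ t ih =>
    by_cases hI : ∃ I ⊆ U, G.IsNIndepSet (t + 1) I
    · obtain ⟨I, hIU, hI⟩ := hI
      have hcard : #(U \ I) ≤ (t + 1).choose 2 := by
        rw [card_sdiff_of_subset hIU, hI.card_eq]
        have : (t + 1 + 1).choose 2 = (t + 1).choose 2 + (t + 1) := by
          rw [Nat.choose_succ_succ' (t + 1) 1, Nat.choose_one_right, add_comm]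
        omega
      obtain ⟨c, hc⟩ := ih (U \ I) hcard
      exact ⟨_, isStarBlockingColoring_of_isIndepSet hI.isIndepSet hc⟩
    · obtain ⟨c, hc⟩ := Set.countable_iff_exists_injOn.mp U.countable_toSet
      exact ⟨c, isStarBlockingColoring_of_injOn hc fun s hs hs' => hI ⟨s, hs, hs'⟩⟩

end SimpleGraph

theorem not_arrowsR_star_of_card_le {V : Type} [Fintype V] (G : SimpleGraph V) (t : ℕ)
    (hV : Fintype.card V ≤ (t + 1).choose 2) :
    ¬ ArrowsR G (completeBipartiteGraph (Fin 1) (Fin t)) := by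
  classical
  intro hG
  obtain ⟨c, hc⟩ := G.exists_isStarBlockingColoring t univ hV
  obtain ⟨f, hf⟩ := hG c fun u v => hc.adj_ne u (mem_univ u) v (mem_univ v)
  let leaves : Finset V := univ.map ⟨fun j => f (Sum.inr j), f.injective.comp Sum.inr_injective⟩
  refine hc.not_injOn_star (f (Sum.inl 0)) (mem_univ _) leaves (subset_univ _)
    ⟨?_, by simp [leaves]⟩ ?_ ?_
  · simp only [leaves, coe_map, coe_univ, Set.image_univ]
    rintro _ ⟨i, rfl⟩ _ ⟨j, rfl⟩ _
    simp
  · simp [leaves]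
  · simp only [leaves, coe_map, coe_univ, Set.image_univ]
    rintro _ ⟨i, rfl⟩ _ ⟨j, rfl⟩ hij
    simpa using hf hij

/-- `none` is the apex and `some ⟨j, a⟩` is vertex `a` of the clique of size `j + 1`. -/
def coneOverCliques (m : ℕ) : SimpleGraph (Option (Σ j : Fin m, Fin (j.val + 1))) where
  Adj u v := u ≠ v ∧ ∀ x ∈ u, ∀ y ∈ v, x.1 = y.1
  symm := ⟨fun _ _ h => ⟨h.1.symm, fun x hx y hy => (h.2 y hy x hx).symm⟩⟩
  loopless := ⟨fun _ h => h.1 rfl⟩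

theorem card_coneOverCliques (m : ℕ) :
    Fintype.card (Option (Σ j : Fin m, Fin (j.val + 1))) = (m + 1).choose 2 + 1 := by
  rw [Fintype.card_option, Fintype.card_sigma, Nat.choose_two_right, ← sum_range_id,
    sum_range_succ']
  simp [Fin.sum_univ_eq_sum_range (· + 1)]

@[simp]
theorem coneOverCliques_adj_none_some {m : ℕ} (x : Σ j : Fin m, Fin (j.val + 1)) :
    (coneOverCliques m).Adj none (some x) := by
  simp [coneOverCliques]

@[simp]
theorem coneOverCliques_adj_some_none {m : ℕ} (x : Σ j : Fin m, Fin (j.val + 1)) :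
    (coneOverCliques m).Adj (some x) none :=
  (coneOverCliques_adj_none_some x).symm

@[simp]
theorem coneOverCliques_adj_some_some {m : ℕ} (x y : Σ j : Fin m, Fin (j.val + 1)) :
    (coneOverCliques m).Adj (some x) (some y) ↔ x ≠ y ∧ x.1 = y.1 := by
  simp [coneOverCliques]

theorem arrowsR_coneOverCliques (m : ℕ) :
    ArrowsR (coneOverCliques m) (completeBipartiteGraph (Fin 1) (Fin m)) := by
  intro c hc
  have hblock (j : Fin m) : Function.Injective fun a => c (some ⟨j, a⟩) := fun a b hab => by
    by_contra hne
    exact hc _ _ ((coneOverCliques_adj_some_some _ _).mpr ⟨sigma_mk_injective.ne hne, rfl⟩) hab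
  obtain ⟨f, hf, hft⟩ := Fin.exists_injective_mem_of_succ_le_card
    (fun j => univ.image fun a => c (some ⟨j, a⟩))
    fun j => by rw [card_image_of_injective _ (hblock j), card_univ, Fintype.card_fin]
  choose x hx using fun j => mem_image.mp (hft j)
  let e : Fin 1 ⊕ Fin m → Option (Σ j : Fin m, Fin (j.val + 1)) :=
    Sum.elim (fun _ => none) fun j => some ⟨j, x j⟩
  have he : Function.Injective e := by
    rintro (a | a) (b | b) h <;> simp_all [e, Fin.fin_one_eq_zero]
  refine ⟨⟨⟨e, he⟩, ?_⟩, ?_⟩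
  · rintro (a | a) (b | b)
    · simp [e]
    · simp [e]
    · simp [e]
    · suffices ¬ (coneOverCliques m).Adj (some ⟨a, x a⟩) (some ⟨b, x b⟩) by simpa [e]
      intro h
      obtain rfl := ((coneOverCliques_adj_some_some _ _).mp h).2
      exact h.ne rfl
  · rintro (a | a) (b | b) h
    · simp [Subsingleton.elim a b]
    · exact (hc _ _ (coneOverCliques_adj_none_some _) h).elim
    · exact (hc _ _ (coneOverCliques_adj_none_some _) h.symm).elim
    · simp only [RelEmbedding.coe_mk, Function.Embedding.coeFn_mk, e, Sum.elim_inr, hx] at h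
      rw [hf h]

theorem rho_completeBipartiteGraph_fin_one (m : ℕ) :
    rho (completeBipartiteGraph (Fin 1) (Fin m)) = (m + 1).choose 2 + 1 := by
  rw [← card_coneOverCliques m]
  refine rho_eq_card _ (arrowsR_coneOverCliques m) fun k hk G => ?_
  rw [card_coneOverCliques] at hk
  exact not_arrowsR_star_of_card_le G m (by rw [Fintype.card_fin]; omega)

theorem stmt10_general (n : ℕ) :
    rho (completeBipartiteGraph (Fin 1) (Fin (n - 1))) = n * (n - 1) / 2 + 1 := by
  rw [rho_completeBipartiteGraph_fin_one, Nat.choose_two_right]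
  rcases n with _ | n <;> simp

/-- For the star `S_n = K_{1,n−1}` with `n ≥ 2`: `ρ(S_n) = n(n−1)/2 + 1`. -/
theorem stmt10 (n : ℕ) (hn : 2 ≤ n) :
    rho (completeBipartiteGraph (Fin 1) (Fin (n - 1))) = n * (n - 1) / 2 + 1 :=
  stmt10_general n
end

section
/- If H' is a spanning subgraph of H obtained from H by removing some edges (same vertex set, edge set contained in that of H), then ρ_R(H') ≥ ρ_R(H). -/
/-- `G` together with `f : α → β` is a replication graph of `H`: every fiber of `f`
is a nonempty clique, and vertices in distinct fibers are adjacent in `G` iff their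
images are adjacent in `H`. -/
def IsReplication {α β : Type} (G : SimpleGraph α) (H : SimpleGraph β) (f : α → β) : Prop :=
  Function.Surjective f ∧
    (∀ u v : α, u ≠ v → f u = f v → G.Adj u v) ∧
    (∀ u v : α, f u ≠ f v → (G.Adj u v ↔ H.Adj (f u) (f v)))

/-- `G →R H` (for a replication graph `G` of `H` via `f`): every proper coloring of `G`
admits a section `s` of `f` whose image is rainbow (pairwise distinct colors), i.e. a
rainbow induced copy of `H` meeting each fiber exactly once. -/
def ArrowsRR {α β : Type} (G : SimpleGraph α) (H : SimpleGraph β) (f : α → β) : Prop :=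
  ∀ c : α → ℕ, (∀ u v : α, G.Adj u v → c u ≠ c v) →
    ∃ s : β → α, (∀ h, f (s h) = h) ∧ Function.Injective fun h => c (s h)

/-- `rhoR H` is the minimum number of vertices of a replication graph `G` of `H`
with `G →R H`. -/
noncomputable def rhoR {β : Type} (H : SimpleGraph β) : ℕ :=
  sInf {m : ℕ | ∃ (G : SimpleGraph (Fin m)) (f : Fin m → β),
    IsReplication G H f ∧ ArrowsRR G H f}

section

variable {α β : Type}

def SimpleGraph.replicationGraph (H : SimpleGraph β) (f : α → β) : SimpleGraph α where
  Adj u v := u ≠ v ∧ (f u = f v ∨ H.Adj (f u) (f v))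
  symm := ⟨fun _ _ ⟨hne, h⟩ => ⟨hne.symm, h.imp Eq.symm H.adj_symm⟩⟩

theorem SimpleGraph.isReplication_replicationGraph (H : SimpleGraph β) {f : α → β}
    (hf : Function.Surjective f) : IsReplication (H.replicationGraph f) H f :=
  ⟨hf, fun _ _ hne hf => ⟨hne, Or.inl hf⟩,
    fun _ _ hf => ⟨fun h => h.2.resolve_left hf, fun h => ⟨H.ne_of_adj h ∘ congrArg f, Or.inr h⟩⟩⟩

theorem IsReplication.le_replicationGraph {G : SimpleGraph α} {H' H : SimpleGraph β}
    {f : α → β} (hG : IsReplication G H' f) (hle : H' ≤ H) : G ≤ H.replicationGraph f :=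
  fun u v huv => ⟨G.ne_of_adj huv, or_iff_not_imp_left.2 fun hf => hle ((hG.2.2 u v hf).1 huv)⟩

theorem ArrowsRR.mono {G G' : SimpleGraph α} {H H' : SimpleGraph β} {f : α → β}
    (h : ArrowsRR G H f) (hle : G ≤ G') : ArrowsRR G' H' f :=
  fun c hc => h c fun u v huv => hc u v (hle huv)

open Finset in
theorem arrowsRR_of_card_le_card_fiber [Fintype α] [Fintype β] [DecidableEq β]
    {G : SimpleGraph α} (H : SimpleGraph β) {f : α → β}
    (hclique : ∀ u v, u ≠ v → f u = f v → G.Adj u v)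
    (hcard : ∀ b, Fintype.card β ≤ #{a | f a = b}) : ArrowsRR G H f := by
  intro c hc
  set t : β → Finset ℕ := fun b => image c {a | f a = b}
  have hct : ∀ b, #(t b) = #{a | f a = b} := fun b =>
    card_image_of_injOn fun u hu v hv huv => by
      by_contra hne
      exact hc u v (hclique u v hne ((mem_filter.1 hu).2.trans (mem_filter.1 hv).2.symm)) huv
  have hall : ∀ s : Finset β, #s ≤ #(s.biUnion t) := by
    intro s
    rcases s.eq_empty_or_nonempty with rfl | ⟨b, hb⟩
    · simp
    calc #s ≤ Fintype.card β := card_le_univ s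
      _ ≤ #(t b) := (hcard b).trans (hct b).ge
      _ ≤ #(s.biUnion t) := card_le_card (subset_biUnion_of_mem t hb)
  obtain ⟨g, hg, hgt⟩ := (all_card_le_biUnion_card_iff_exists_injective t).1 hall
  choose s hs hcs using fun b => mem_image.1 (hgt b)
  refine ⟨s, fun b => (mem_filter.1 (hs b)).2, fun b b' hbb' => hg ?_⟩
  simpa only [hcs] using hbb'

open Finset in
theorem exists_replication_arrowsRR [Fintype β] (H : SimpleGraph β) :
    ∃ m, ∃ (G : SimpleGraph (Fin m)) (f : Fin m → β),
      IsReplication G H f ∧ ArrowsRR G H f := by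
  classical
  set n := Fintype.card β
  let e : Fin (n * n) ≃ β × Fin n := Fintype.equivOfCardEq (by simp [n])
  have hfiber : ∀ b, #{a | (e a).1 = b} = n := fun b => by
    rw [card_equiv e (t := {b} ×ˢ univ) (by simp [Prod.ext_iff, eq_comm]), card_product,
      card_singleton, card_univ, Fintype.card_fin, one_mul]
  have hsurj : Function.Surjective fun a => (e a).1 := fun b =>
    ⟨e.symm (b, ⟨0, Fintype.card_pos_iff.2 ⟨b⟩⟩), by simp⟩
  exact ⟨n * n, H.replicationGraph _, _, H.isReplication_replicationGraph hsurj,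
    arrowsRR_of_card_le_card_fiber H (fun _ _ hne hf => ⟨hne, Or.inl hf⟩) fun b => (hfiber b).ge⟩

end

/-- If `H'` is a spanning subgraph of `H` (same vertices, fewer edges), then
`ρ_R(H') ≥ ρ_R(H)`. -/
theorem stmt14 {V : Type} [Fintype V] (H' H : SimpleGraph V) (hle : H' ≤ H) :
    rhoR H ≤ rhoR H' := by
  obtain ⟨G', f, hrep, harrows⟩ := Nat.sInf_mem (exists_replication_arrowsRR H')
  exact Nat.sInf_le ⟨H.replicationGraph f, f, H.isReplication_replicationGraph hrep.1,
    harrows.mono (hrep.le_replicationGraph hle)⟩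
end

section
/- Let H be a finite simple graph whose vertex set is partitioned into the vertex sets of two disjoint induced subgraphs H_1 and H_2 (so that H consists of H_1, H_2 and possibly some edges between them), and let m(H_1,H_2) be the number of non-adjacent pairs (u,v) with u ∈ V(H_1), v ∈ V(H_2). Then ρ_R(H_1) + ρ_R(H_2) ≤ ρ_R(H) ≤ ρ_R(H_1) + ρ_R(H_2) + m(H_1,H_2). -/
/-!
A replication graph of `H` is determined by its projection `f`; it is `H.replicate f`.

Lower bound: a witness for `H` restricts, over `V₁` and over `V₂`, to witnesses for `H₁` and
`H₂`; a colouring of a restriction is extended to the whole graph by fresh colours.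

Upper bound: glue witnesses for `H₁` and `H₂` and add to the fiber over `u ∈ V₁` one vertex
for every `v ∈ V₂` not adjacent to `u`. Given a colouring, first pick a rainbow section over
`V₂`. The fiber over `u` is a clique, so at most `#{v | v ≁ u}` of its vertices carry the colour
of a chosen representative of a non-neighbour of `u`; the remaining ones contain a copy of the
fiber of the witness for `H₁`, where a rainbow section over `V₁` is found.

Witnesses exist by Hall's theorem: `|V(H)|` copies of each vertex of `H` suffice.
-/

open Function Sum

theorem Function.Pullback.fst_injective {α β β' : Type} {f : α → β} {g : β' → β}
    (hg : Injective g) : Injective (Pullback.fst : f.Pullback g → α) := fun p q hpq =>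
  Subtype.ext (Prod.ext hpq (hg (p.2.symm.trans ((congrArg f hpq).trans q.2))))

theorem Nat.card_le_card_subtype_notMem_add {γ : Type} [Finite γ] {k : γ → ℕ}
    (hk : Injective k) (F : Finset ℕ) : Nat.card γ ≤ Nat.card {z // k z ∉ F} + F.card := by
  classical
  rw [← Nat.card_congr (Equiv.sumCompl fun z => k z ∈ F), Nat.card_sum, add_comm]
  gcongr
  exact (Nat.card_le_card_of_injective (fun z : {z // k z ∈ F} => (⟨k z, z.2⟩ : F))
    fun z w h => Subtype.ext (hk (congrArg Subtype.val h))).trans (Nat.card_eq_finsetCard F).le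

theorem exists_embedding_fiberwise {α β γ : Type} [Finite α] [Finite γ] {f : α → β}
    {g : γ → β} {p : β → γ → Prop}
    (h : ∀ b, Nat.card {x // f x = b} ≤ Nat.card {z : {z // g z = b} // p b z}) :
    ∃ ψ : α ↪ γ, ∀ x, g (ψ x) = f x ∧ p (f x) (ψ x) := by
  have he (b : β) : Nonempty ({x // f x = b} ↪ {z : {z // g z = b} // p b z}) := by
    have := Fintype.ofFinite {x // f x = b}
    have := Fintype.ofFinite {z : {z // g z = b} // p b z}
    exact Function.Embedding.nonempty_of_card_le
      (by simpa only [Nat.card_eq_fintype_card] using h b)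
  let e (b : β) := (he b).some
  let ψ := (Equiv.sigmaFiberEquiv f).symm.toEmbedding.trans <|
    (Function.Embedding.sigmaMap (β' := fun b => {z : {z // g z = b} // p b z})
      (.refl β) e).trans <|
    (Function.Embedding.sigmaMap (.refl β) fun b => Function.Embedding.subtype _).trans
    (Equiv.sigmaFiberEquiv g).toEmbedding
  exact ⟨ψ, fun x => ⟨(e (f x) ⟨x, rfl⟩).1.2, (e (f x) ⟨x, rfl⟩).2⟩⟩

namespace SimpleGraph

variable {α α' β β' : Type}

theorem Embedding.exists_extend_coloring [Countable α] {G : SimpleGraph α}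
    {G' : SimpleGraph α'} (e : G' ↪g G) {c : α' → ℕ} (hc : ∀ x y, G'.Adj x y → c x ≠ c y) :
    ∃ c' : α → ℕ, (∀ x y, G.Adj x y → c' x ≠ c' y) ∧ ∀ x y, c' (e x) = c' (e y) ↔ c x = c y := by
  obtain ⟨n, hn⟩ := Countable.exists_injective_nat α
  have he := e.injective
  refine ⟨extend e (fun x => 2 * c x) (fun y => 2 * n y + 1), fun x y hxy => ?_,
    fun x y => by simp [he.extend_apply]⟩
  rcases em (∃ x', e x' = x) with ⟨x, rfl⟩ | hx <;>
    rcases em (∃ y', e y' = y) with ⟨y, rfl⟩ | hy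
  · simpa [he.extend_apply] using hc x y (e.map_adj_iff.1 hxy)
  · rw [he.extend_apply, extend_apply' _ _ _ hy]; omega
  · rw [he.extend_apply, extend_apply' _ _ _ hx]; omega
  · rw [extend_apply' _ _ _ hx, extend_apply' _ _ _ hy]
    exact fun h => hxy.ne (hn (by omega))

def replicate (H : SimpleGraph β) (f : α → β) : SimpleGraph α where
  Adj x y := x ≠ y ∧ (f x = f y ∨ H.Adj (f x) (f y))
  symm := ⟨fun _ _ h => ⟨h.1.symm, h.2.imp Eq.symm fun h => h.symm⟩⟩
  loopless := ⟨fun _ h => h.1 rfl⟩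

variable {H : SimpleGraph β} {H' : SimpleGraph β'} {f : α → β}

@[simp]
theorem replicate_adj {x y : α} :
    (H.replicate f).Adj x y ↔ x ≠ y ∧ (f x = f y ∨ H.Adj (f x) (f y)) := Iff.rfl

theorem eq_of_apply_eq_of_color_eq {c : α → ℕ}
    (hc : ∀ x y, (H.replicate f).Adj x y → c x ≠ c y) {x y : α} (hf : f x = f y)
    (hxy : c x = c y) : x = y :=
  by_contra fun hne => hc x y (replicate_adj.2 ⟨hne, .inl hf⟩) hxy

def Embedding.replicate {f' : α' → β'} (φ : H' ↪g H) (ι : α' ↪ α)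
    (h : ∀ x, f (ι x) = φ (f' x)) : H'.replicate f' ↪g H.replicate f where
  toEmbedding := ι
  map_rel_iff' := by simp [h, ι.injective.ne_iff, φ.injective.eq_iff]

end SimpleGraph

open SimpleGraph

section Replication

variable {α β β' γ : Type} {H : SimpleGraph β} {H' : SimpleGraph β'} {f : α → β}

theorem isReplication_iff {G : SimpleGraph α} :
    IsReplication G H f ↔ Surjective f ∧ G = H.replicate f := by
  refine ⟨fun ⟨hf, hfiber, hcross⟩ => ⟨hf, ?_⟩, ?_⟩
  · ext x y
    by_cases hxy : f x = f y
    · exact ⟨fun h => ⟨h.ne, .inl hxy⟩, fun h => hfiber x y h.1 hxy⟩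
    · simp [hcross x y hxy, hxy, ne_of_apply_ne f hxy]
  · rintro ⟨hf, rfl⟩
    exact ⟨hf, fun x y hne hxy => ⟨hne, .inl hxy⟩,
      fun x y hxy => by simp [hxy, ne_of_apply_ne f hxy]⟩

theorem ArrowsRR.of_embedding {g : γ → β} (h : ArrowsRR (H.replicate f) H f) (ψ : α ↪ γ)
    (hψ : ∀ x, g (ψ x) = f x) : ArrowsRR (H.replicate g) H g := by
  intro c hc
  obtain ⟨s, hs, hinj⟩ := h (c ∘ ψ) fun x y hxy =>
    hc _ _ ((Embedding.replicate (.refl (G := H)) ψ hψ).map_adj_iff.2 hxy)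
  exact ⟨ψ ∘ s, fun b => (hψ _).trans (hs b), hinj⟩

theorem exists_replication_fin_card [Finite α] (hf : Surjective f)
    (h : ArrowsRR (H.replicate f) H f) :
    ∃ (G : SimpleGraph (Fin (Nat.card α))) (g : Fin (Nat.card α) → β),
      IsReplication G H g ∧ ArrowsRR G H g := by
  let e := (Finite.equivFin α).symm
  exact ⟨_, f ∘ e, isReplication_iff.2 ⟨hf.comp e.surjective, rfl⟩,
    h.of_embedding e.symm.toEmbedding fun x => by simp⟩

theorem rhoR_le_card [Finite α] (hf : Surjective f) (h : ArrowsRR (H.replicate f) H f) :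
    rhoR H ≤ Nat.card α :=
  Nat.sInf_le (exists_replication_fin_card hf h)

theorem arrowsRR_replicate_of_card_le_card_fiber [Fintype β] [Finite α]
    (h : ∀ b, Fintype.card β ≤ Nat.card {x // f x = b}) : ArrowsRR (H.replicate f) H f := by
  classical
  have := Fintype.ofFinite α
  intro c hc
  let t (b : β) : Finset ℕ := ({x | f x = b} : Finset α).image c
  have hall (s : Finset β) : s.card ≤ (s.biUnion t).card := by
    rcases s.eq_empty_or_nonempty with rfl | ⟨b, hb⟩
    · simp
    calc s.card ≤ Fintype.card β := s.card_le_univ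
      _ ≤ (t b).card := by
        rw [Finset.card_image_of_injOn fun x hx y hy hxy => eq_of_apply_eq_of_color_eq hc
          ((Finset.mem_filter.1 hx).2.trans (Finset.mem_filter.1 hy).2.symm) hxy,
          ← Fintype.card_subtype]
        simpa only [Nat.card_eq_fintype_card] using h b
      _ ≤ (s.biUnion t).card := Finset.card_le_card (Finset.subset_biUnion_of_mem t hb)
  obtain ⟨r, hr, hrt⟩ := (Finset.all_card_le_biUnion_card_iff_exists_injective t).1 hall
  choose s hs hcs using fun b => Finset.mem_image.1 (hrt b)
  exact ⟨s, fun b => (Finset.mem_filter.1 (hs b)).2,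
    fun b b' hbb' => hr (by simpa [hcs] using hbb')⟩

variable (H) in
theorem exists_rhoR [Finite β] :
    ∃ f : Fin (rhoR H) → β, Surjective f ∧ ArrowsRR (H.replicate f) H f := by
  have := Fintype.ofFinite β
  have hfiber (b : β) : Nat.card {x : β × Fin (Fintype.card β) // x.1 = b} = Fintype.card β :=
    Nat.card_congr ⟨fun x => x.1.2, fun i => ⟨(b, i), rfl⟩, by rintro ⟨⟨_, i⟩, rfl⟩; rfl,
      fun _ => rfl⟩ |>.trans (Nat.card_eq_fintype_card.trans (Fintype.card_fin _))
  obtain ⟨G, f, hrep, harr⟩ : rhoR H ∈ _ := Nat.sInf_mem ⟨_, exists_replication_fin_card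
    (fun b => ⟨(b, ⟨0, Fintype.card_pos_iff.2 ⟨b⟩⟩), rfl⟩)
    (arrowsRR_replicate_of_card_le_card_fiber (H := H) fun b => (hfiber b).ge)⟩
  obtain ⟨hf, rfl⟩ := isReplication_iff.1 hrep
  exact ⟨f, hf, harr⟩

theorem ArrowsRR.pullback [Countable α] (φ : H' ↪g H) (h : ArrowsRR (H.replicate f) H f) :
    ArrowsRR (H'.replicate (Pullback.snd : f.Pullback φ → β')) H' Pullback.snd := by
  intro c hc
  let ι : f.Pullback φ ↪ α := ⟨Pullback.fst, Pullback.fst_injective φ.injective⟩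
  obtain ⟨c', hc', hc'c⟩ := (Embedding.replicate φ ι fun p => p.2).exists_extend_coloring hc
  obtain ⟨s, hs, hinj⟩ := h c' hc'
  exact ⟨fun b => ⟨(s (φ b), b), hs (φ b)⟩, fun _ => rfl,
    fun b b' hbb' => φ.injective (hinj ((hc'c _ _).2 hbb'))⟩

theorem rhoR_le_card_pullback [Finite α] (φ : H' ↪g H) (hf : Surjective f)
    (h : ArrowsRR (H.replicate f) H f) : rhoR H' ≤ Nat.card (f.Pullback φ) :=
  have : Finite (f.Pullback φ) := .of_injective _ (Pullback.fst_injective φ.injective)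
  rhoR_le_card (fun b => (hf (φ b)).elim fun x hx => ⟨⟨(x, b), hx⟩, rfl⟩) (h.pullback φ)

end Replication

section Sum

variable {α α₁ α₂ V₁ V₂ : Type}

theorem card_pullback_inl_add_card_pullback_inr_le [Finite α] (f : α → V₁ ⊕ V₂) :
    Nat.card (f.Pullback inl) + Nat.card (f.Pullback inr) ≤ Nat.card α := by
  have h₁ := Pullback.fst_injective (f := f) inl_injective
  have h₂ := Pullback.fst_injective (f := f) inr_injective
  have : Finite (f.Pullback inl) := .of_injective _ h₁
  have : Finite (f.Pullback inr) := .of_injective _ h₂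
  rw [← Nat.card_sum]
  exact Nat.card_le_card_of_injective _ (h₁.sumElim h₂ fun p q hpq =>
    inl_ne_inr (p.2.symm.trans ((congrArg f hpq).trans q.2)))

variable (H : SimpleGraph (V₁ ⊕ V₂))

theorem rhoR_comap_inl_add_rhoR_comap_inr_le [Finite V₁] [Finite V₂] :
    rhoR (H.comap inl) + rhoR (H.comap inr) ≤ rhoR H := by
  obtain ⟨f, hf, h⟩ := exists_rhoR H
  calc _ ≤ Nat.card (f.Pullback inl) + Nat.card (f.Pullback inr) :=
        add_le_add (rhoR_le_card_pullback (.comap .inl H) hf h)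
          (rhoR_le_card_pullback (.comap .inr H) hf h)
    _ ≤ Nat.card (Fin (rhoR H)) := card_pullback_inl_add_card_pullback_inr_le f
    _ = rhoR H := Nat.card_fin _

abbrev NonAdjPair : Type := {p : V₁ × V₂ // ¬ H.Adj (inl p.1) (inr p.2)}

def glueMap (f₁ : α₁ → V₁) (f₂ : α₂ → V₂) : (α₁ ⊕ NonAdjPair H) ⊕ α₂ → V₁ ⊕ V₂ :=
  Sum.map (Sum.elim f₁ fun p => p.1.1) f₂

theorem card_fiber_sumElim_nonAdjPair [Finite α₁] [Finite V₁] [Finite V₂] (f₁ : α₁ → V₁) (u : V₁) :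
    Nat.card {z : α₁ ⊕ NonAdjPair H // Sum.elim f₁ (fun p => p.1.1) z = u} =
      Nat.card {x // f₁ x = u} + Nat.card {v // ¬ H.Adj (inl u) (inr v)} := by
  rw [Nat.card_congr Equiv.subtypeSum, Nat.card_sum]
  congr 1
  exact Nat.card_congr ⟨fun p => ⟨p.1.1.2, by obtain ⟨⟨_, hv⟩, rfl⟩ := p; exact hv⟩,
    fun v => ⟨⟨(u, v.1), v.2⟩, rfl⟩, by rintro ⟨⟨⟨_, v⟩, hv⟩, rfl⟩; rfl, fun _ => rfl⟩

theorem ArrowsRR.glue [Finite α₁] [Finite V₁] [Fintype V₂] {f₁ : α₁ → V₁} {f₂ : α₂ → V₂}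
    (h₁ : ArrowsRR ((H.comap inl).replicate f₁) (H.comap inl) f₁)
    (h₂ : ArrowsRR ((H.comap inr).replicate f₂) (H.comap inr) f₂) :
    ArrowsRR (H.replicate (glueMap H f₁ f₂)) H (glueMap H f₁ f₂) := by
  classical
  intro c hc
  obtain ⟨s₂, hs₂, hs₂inj⟩ := h₂ (c ∘ inr) fun x y hxy => hc _ _
    ((Embedding.replicate (.comap .inr H) .inr fun _ => rfl).map_adj_iff.2 hxy)
  let forbidden (u : V₁) : Finset ℕ :=
    ({v | ¬ H.Adj (inl u) (inr v)} : Finset V₂).image (c ∘ inr ∘ s₂)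
  have hcard (u : V₁) : Nat.card {x // f₁ x = u} ≤ Nat.card
      {z : {z // Sum.elim f₁ (fun p => p.1.1) z = u} // c (inl z.1) ∉ forbidden u} := by
    have hk : Injective fun z : {z // Sum.elim f₁ (fun p => p.1.1) z = u} => c (inl z.1) :=
      fun z w hzw => Subtype.ext (inl_injective (eq_of_apply_eq_of_color_eq hc
        (congrArg inl (z.2.trans w.2.symm)) hzw))
    have hsplit := Nat.card_le_card_subtype_notMem_add hk (forbidden u)
    have hforbidden : (forbidden u).card ≤ Nat.card {v // ¬ H.Adj (inl u) (inr v)} :=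
      Finset.card_image_le.trans (by rw [Nat.card_eq_fintype_card, Fintype.card_subtype])
    rw [card_fiber_sumElim_nonAdjPair] at hsplit
    omega
  obtain ⟨ψ, hψ⟩ := exists_embedding_fiberwise (p := fun u z => c (inl z) ∉ forbidden u) hcard
  have hψ' (x : α₁) : glueMap H f₁ f₂ (inl (ψ x)) = inl (f₁ x) := congrArg inl (hψ x).1
  obtain ⟨s₁, hs₁, hs₁inj⟩ := h₁ (c ∘ inl ∘ ψ) fun x y hxy => hc _ _
    ((Embedding.replicate (.comap .inl H) (ψ.trans .inl) hψ').map_adj_iff.2 hxy)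
  have cross (u : V₁) (v : V₂) : c (inl (ψ (s₁ u))) ≠ c (inr (s₂ v)) := by
    by_cases huv : H.Adj (inl u) (inr v)
    · exact hc _ _ (replicate_adj.2
        ⟨inl_ne_inr, .inr (by rwa [hψ', hs₁, glueMap, Sum.map_inr, hs₂])⟩)
    · have := (hψ (s₁ u)).2
      rw [hs₁] at this
      exact fun h => this (Finset.mem_image.2 ⟨v, by simpa using huv, h.symm⟩)
  refine ⟨Sum.elim (inl ∘ ψ ∘ s₁) (inr ∘ s₂), ?_, ?_⟩
  · rintro (u | v)
    · simp [hψ', hs₁]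
    · simp [glueMap, hs₂]
  · rintro (u | v) (u' | v') h
    · exact congrArg inl (hs₁inj h)
    · exact absurd h (cross u v')
    · exact absurd h.symm (cross u' v)
    · exact congrArg inr (hs₂inj h)

open Finset in
theorem rhoR_le_rhoR_comap_inl_add_rhoR_comap_inr_add_card [Fintype V₁] [Fintype V₂]
    [DecidableRel H.Adj] : rhoR H ≤ rhoR (H.comap inl) + rhoR (H.comap inr) +
      #{p : V₁ × V₂ | ¬ H.Adj (inl p.1) (inr p.2)} := by
  obtain ⟨f₁, hf₁, h₁⟩ := exists_rhoR (H.comap inl)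
  obtain ⟨f₂, hf₂, h₂⟩ := exists_rhoR (H.comap inr)
  have hsurj : Surjective (glueMap H f₁ f₂) :=
    Sum.map_surjective.2 ⟨fun u => (hf₁ u).elim fun x hx => ⟨inl x, hx⟩, hf₂⟩
  calc rhoR H
      ≤ Nat.card ((Fin (rhoR (H.comap inl)) ⊕ NonAdjPair H) ⊕ Fin (rhoR (H.comap inr))) :=
        rhoR_le_card hsurj (h₁.glue H h₂)
    _ = _ := by
      rw [Nat.card_sum, Nat.card_sum, Nat.card_fin, Nat.card_fin, Nat.card_eq_fintype_card,
        Fintype.card_subtype, add_right_comm]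

end Sum

/-- If `H` on `V₁ ⊕ V₂` induces `H₁` on `V₁` and `H₂` on `V₂`, and `m` is the number
of non-adjacent pairs `(u, v)` with `u ∈ V₁`, `v ∈ V₂`, then
`ρ_R(H₁) + ρ_R(H₂) ≤ ρ_R(H) ≤ ρ_R(H₁) + ρ_R(H₂) + m`. -/
theorem stmt15 {V₁ V₂ : Type} [Fintype V₁] [Fintype V₂]
    (H : SimpleGraph (V₁ ⊕ V₂)) [DecidableRel H.Adj]
    (H₁ : SimpleGraph V₁) (H₂ : SimpleGraph V₂)
    (hH₁ : ∀ a b : V₁, H₁.Adj a b ↔ H.Adj (Sum.inl a) (Sum.inl b))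
    (hH₂ : ∀ a b : V₂, H₂.Adj a b ↔ H.Adj (Sum.inr a) (Sum.inr b))
    (m : ℕ)
    (hm : m = (Finset.univ.filter
      fun p : V₁ × V₂ => ¬ H.Adj (Sum.inl p.1) (Sum.inr p.2)).card) :
    rhoR H₁ + rhoR H₂ ≤ rhoR H ∧ rhoR H ≤ rhoR H₁ + rhoR H₂ + m := by
  obtain rfl : H₁ = H.comap inl := by ext; exact hH₁ _ _
  obtain rfl : H₂ = H.comap inr := by ext; exact hH₂ _ _
  subst hm
  exact ⟨rhoR_comap_inl_add_rhoR_comap_inr_le H,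
    rhoR_le_rhoR_comap_inl_add_rhoR_comap_inr_add_card H⟩
end
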